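/- For every even integer w ≥ 2, the gap-counting function of the numerical semigroup Γ_{w,w+1} generated by w and w+1 satisfies I_{w,w+1}(1 + (w² − w)/2) = (w² + 2w)/8 − 1; that is, the number of natural numbers n with n ≥ 1 + (w² − w)/2 not belonging to Γ_{w,w+1} is exactly (w² + 2w)/8 − 1. -/

import Mathlib

/-!
Since `n ∈ ⟨w, w + 1⟩` iff `n % w ≤ n / w`, the gaps are the numbers `q * w + r` with `q < r < w`.
So the row `[q w, q w + w)` contains `w - 1 - q` gaps, and there are `(w - q).choose 2` gaps
beyond `q w`. For `w = 2 k + 2` the threshold `1 + (w² - w) / 2` is `k w + (k + 2)`: the rest of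
row `k` holds `k` gaps and the rows from `k + 1` on hold `(k + 1).choose 2`, in total
`(k + 2).choose 2 - 1 = (w² + 2 w) / 8 - 1`.
-/

open Finset

namespace NumericalSemigroup

theorem mem_closure_pair_succ_iff {w : ℕ} (hw : 0 < w) (n : ℕ) :
    n ∈ AddSubmonoid.closure ({w, w + 1} : Set ℕ) ↔ n % w ≤ n / w := by
  rw [AddSubmonoid.mem_closure_pair]
  constructor
  · rintro ⟨a, b, rfl⟩
    have hsplit : a • w + b • (w + 1) = b + (a + b) * w := by simp only [smul_eq_mul]; ring
    rw [hsplit, Nat.add_mul_mod_self_right, Nat.add_mul_div_right _ _ hw]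
    exact (Nat.mod_le b w).trans ((Nat.le_add_left b a).trans (Nat.le_add_left _ _))
  · intro h
    refine ⟨n / w - n % w, n % w, ?_⟩
    have hn := Nat.div_add_mod n w
    simp only [smul_eq_mul]
    zify [h] at hn ⊢
    linarith

/-- For `0 < w`, the gaps of `⟨w, w + 1⟩` in `[a, b)`, by `mem_closure_pair_succ_iff`. -/
def gapsIco (w a b : ℕ) : Finset ℕ :=
  (Ico a b).filter fun n => n / w < n % w

variable {w : ℕ}

theorem setOf_le_notMem_closure_pair_succ (hw : 0 < w) (T : ℕ) :
    {n : ℕ | T ≤ n ∧ n ∉ AddSubmonoid.closure ({w, w + 1} : Set ℕ)} = gapsIco w T (w * w) := by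
  ext n
  simp only [gapsIco, Set.mem_ofPred_eq, coe_filter, mem_Ico, mem_closure_pair_succ_iff hw, not_le]
  constructor
  · rintro ⟨hTn, hgap⟩
    have hq : n / w < w := hgap.trans (Nat.mod_lt n hw)
    exact ⟨⟨hTn, (Nat.div_lt_iff_lt_mul hw).mp hq⟩, hgap⟩
  · rintro ⟨⟨hTn, -⟩, hgap⟩
    exact ⟨hTn, hgap⟩

theorem gapsIco_row (q r : ℕ) :
    gapsIco w (q * w + r) (q * w + w) = Ico (q * w + max r (q + 1)) (q * w + w) := by
  ext n
  simp only [gapsIco, mem_filter, mem_Ico]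
  have hn := Nat.div_add_mod' n w
  constructor
  · rintro ⟨hn_mem, hgap⟩
    have hdiv : n / w = q := Nat.div_eq_of_lt_le (by nlinarith) (by nlinarith)
    rw [hdiv] at hn hgap
    omega
  · intro hn_mem
    have hdiv : n / w = q :=
      Nat.div_eq_of_lt_le (by nlinarith [le_max_left r (q + 1)]) (by nlinarith)
    rw [hdiv] at hn ⊢
    omega

theorem card_gapsIco_row (q r : ℕ) :
    (gapsIco w (q * w + r) (q * w + w)).card = w - max r (q + 1) := by
  rw [gapsIco_row, Nat.card_Ico]
  omega

theorem gapsIco_union {a b c : ℕ} (hab : a ≤ b) (hbc : b ≤ c) :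
    gapsIco w a b ∪ gapsIco w b c = gapsIco w a c := by
  rw [gapsIco, gapsIco, gapsIco, ← filter_union, Ico_union_Ico_eq_Ico hab hbc]

theorem card_gapsIco_union {a b c : ℕ} (hab : a ≤ b) (hbc : b ≤ c) :
    (gapsIco w a c).card = (gapsIco w a b).card + (gapsIco w b c).card := by
  rw [← gapsIco_union hab hbc, card_union_of_disjoint]
  exact disjoint_filter_filter (Ico_disjoint_Ico_consecutive a b c)

theorem card_gapsIco_mul_of_le {q : ℕ} (hq : q ≤ w) :
    (gapsIco w (q * w) (w * w)).card = (w - q).choose 2 := by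
  obtain ⟨d, hd⟩ := Nat.exists_eq_add_of_le hq
  rw [show w - q = d by omega]
  induction d generalizing q with
  | zero => simp [gapsIco, hd]
  | succ d ih =>
    have hrow : q * w + w = (q + 1) * w := by ring
    have hfirst : (gapsIco w (q * w) (q * w + w)).card = d := by
      have := card_gapsIco_row (w := w) q 0
      rw [add_zero, max_eq_right (Nat.zero_le _)] at this
      omega
    rw [card_gapsIco_union (b := q * w + w) (by omega) (by nlinarith), hfirst, hrow,
      ih (by omega) (by omega), Nat.choose_succ_succ', Nat.choose_one_right, add_comm]

theorem card_gapsIco_mul_add {q r : ℕ} (hqr : q < r) (hrw : r ≤ w) :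
    (gapsIco w (q * w + r) (w * w)).card = (w - r) + (w - (q + 1)).choose 2 := by
  have hrow : q * w + w = (q + 1) * w := by ring
  rw [card_gapsIco_union (b := q * w + w) (by omega) (by nlinarith), card_gapsIco_row,
    max_eq_left hqr, hrow, card_gapsIco_mul_of_le (by omega)]

end NumericalSemigroup

open NumericalSemigroup in
theorem gap_count_V1 (w : ℕ) (hw : 2 ≤ w) (hweven : Even w) :
    {n : ℕ | 1 + (w ^ 2 - w) / 2 ≤ n ∧ n ∉ AddSubmonoid.closure ({w, w + 1} : Set ℕ)}.ncard =
      (w ^ 2 + 2 * w) / 8 - 1 := by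
  obtain ⟨k, rfl⟩ : ∃ k, w = 2 * k + 2 := ⟨w / 2 - 1, by rcases hweven with ⟨m, rfl⟩; omega⟩
  have hthreshold : 1 + ((2 * k + 2) ^ 2 - (2 * k + 2)) / 2 = k * (2 * k + 2) + (k + 2) := by
    rw [show (2 * k + 2) ^ 2 - (2 * k + 2) = 2 * (2 * k * k + 3 * k + 1) by
      rw [Nat.sub_eq_of_eq_add]; ring, Nat.mul_div_cancel_left _ two_pos]
    ring
  have htarget : ((2 * k + 2) ^ 2 + 2 * (2 * k + 2)) / 8 = (k + 2).choose 2 := by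
    rw [Nat.choose_two_right, show k + 2 - 1 = k + 1 from rfl,
      show (2 * k + 2) ^ 2 + 2 * (2 * k + 2) = 4 * ((k + 2) * (k + 1)) by ring,
      show 8 = 4 * 2 from rfl, Nat.mul_div_mul_left _ _ (by norm_num)]
  have hpascal : (k + 2).choose 2 = k + 1 + (k + 1).choose 2 := by
    have := Nat.choose_succ_succ' (k + 1) 1
    rwa [Nat.choose_one_right] at this
  rw [hthreshold, setOf_le_notMem_closure_pair_succ (by omega), Set.ncard_coe_finset,
    card_gapsIco_mul_add (by omega) (by omega), htarget, hpascal,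
    show 2 * k + 2 - (k + 1) = k + 1 by omega]
  omega
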